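/- arXiv:1812.09367 — 3 statements merged into one kernel-verified Lean document; each statement's English description precedes it below -/
import Mathlib

section
/- Let p ≥ 1 be an integer and let δ, ξ > 0 with δξ < p; set γ := pδξ/(p + (p−1)δξ). Let θ₀, τ ∈ ℝ^p and ν > 0 be such that both θ₀ and θ₀ + ντ are unit vectors. Set V₀ := (1 − δξ/p)I_p + δξ·θ₀θ₀ᵀ and V₁ := (1 − δξ/p)I_p + δξ·(θ₀+ντ)(θ₀+ντ)ᵀ. Then for every unit vector u ∈ ℝ^p, the quantities 1 − γ(uᵀθ₀)² and 1 − γ(uᵀ(θ₀+ντ))² are strictly positive, and log[(det V₁)^{−1/2}(uᵀV₁^{−1}u)^{−p/2}] − log[(det V₀)^{−1/2}(uᵀV₀^{−1}u)^{−p/2}] = −(p/2)·log(1 − γν·(2(uᵀθ₀)(uᵀτ) + ν(uᵀτ)²)/(1 − γ(uᵀθ₀)²)). -/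
open Matrix

/-!
Both shapes are spiked matrices `a • 1 + b • θθᵀ` with `a = 1 - δξ/p`, `b = δξ` and a unit
spike `θ`. By the matrix determinant lemma their determinant `a ^ p (1 + b/a)` does not depend on
the spike, so the determinant factors cancel in the ratio. By Sherman–Morrison the quadratic form
of the inverse is `uᵀV⁻¹u = a⁻¹ (1 - γ (uᵀθ)²)` with `γ = b/(a + b)`, and `γ < 1` together with
Cauchy–Schwarz makes it positive. The log-likelihood ratio is therefore `-(p/2)` times the
logarithm of the ratio of these two quadratic forms.
-/

section Spiked

variable {K n : Type*} [Field K] [Fintype n] [DecidableEq n] (a b : K) (θ : n → K)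

theorem inv_smul_one_add_smul_vecMulVec (ha : a ≠ 0) (hab : a + b * (θ ⬝ᵥ θ) ≠ 0) :
    (a • (1 : Matrix n n K) + b • vecMulVec θ θ)⁻¹ =
      a⁻¹ • 1 - (b / (a * (a + b * (θ ⬝ᵥ θ)))) • vecMulVec θ θ := by
  apply inv_eq_right_inv
  simp only [Matrix.add_mul, Matrix.mul_sub, Matrix.smul_mul, Matrix.mul_smul, Matrix.one_mul,
    Matrix.mul_one, vecMulVec_mul_vecMulVec, vecMulVec_smul, smul_smul]
  match_scalars <;> field_simp; ring

theorem det_smul_one_add_smul_vecMulVec (ha : a ≠ 0) (η : n → K) :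
    (a • (1 : Matrix n n K) + b • vecMulVec θ η).det =
      a ^ Fintype.card n * (1 + b / a * (η ⬝ᵥ θ)) := by
  have hfactor : a • (1 : Matrix n n K) + b • vecMulVec θ η =
      a • (1 + replicateCol Unit ((b / a) • θ) * replicateRow Unit η) := by
    rw [← vecMulVec_eq, smul_vecMulVec, smul_add, smul_smul, mul_div_cancel₀ b ha]
  rw [hfactor, det_smul, det_one_add_replicateCol_mul_replicateRow, dotProduct_smul, smul_eq_mul]

theorem dotProduct_inv_smul_one_add_smul_vecMulVec_mulVec (ha : a ≠ 0)
    (hab : a + b * (θ ⬝ᵥ θ) ≠ 0) (u : n → K) :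
    u ⬝ᵥ ((a • (1 : Matrix n n K) + b • vecMulVec θ θ)⁻¹ *ᵥ u) =
      a⁻¹ * (u ⬝ᵥ u - b / (a + b * (θ ⬝ᵥ θ)) * (u ⬝ᵥ θ) ^ 2) := by
  rw [inv_smul_one_add_smul_vecMulVec a b θ ha hab, sub_mulVec, smul_mulVec, smul_mulVec,
    one_mulVec, vecMulVec_mulVec, dotProduct_sub, dotProduct_smul, dotProduct_smul,
    dotProduct_smul, dotProduct_comm θ u]
  simp only [smul_eq_mul, MulOpposite.smul_eq_mul_unop, MulOpposite.unop_op]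
  field_simp

end Spiked

theorem sq_dotProduct_le {R n : Type*} [CommRing R] [LinearOrder R] [IsStrictOrderedRing R]
    [Fintype n] (u w : n → R) : (u ⬝ᵥ w) ^ 2 ≤ (u ⬝ᵥ u) * (w ⬝ᵥ w) := by
  simpa only [dotProduct, sq] using Finset.sum_mul_sq_le_sq_mul_sq Finset.univ u w

theorem one_sub_mul_sq_dotProduct_pos {n : Type*} [Fintype n] {γ : ℝ} (hγ0 : 0 ≤ γ)
    (hγ1 : γ < 1) {u w : n → ℝ} (hu : u ⬝ᵥ u = 1) (hw : w ⬝ᵥ w = 1) :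
    0 < 1 - γ * (u ⬝ᵥ w) ^ 2 := by
  have hcs := sq_dotProduct_le u w
  rw [hu, hw, one_mul] at hcs
  nlinarith [mul_le_mul_of_nonneg_left hcs hγ0]

theorem log_rpow_mul_rpow_sub_log_rpow_mul_rpow {d q₀ q₁ : ℝ} (hd : 0 < d) (hq₀ : 0 < q₀)
    (hq₁ : 0 < q₁) (p : ℝ) :
    Real.log (d ^ (-(1 : ℝ) / 2) * q₁ ^ (-p / 2)) - Real.log (d ^ (-(1 : ℝ) / 2) * q₀ ^ (-p / 2)) =
      -(p / 2) * Real.log (q₁ / q₀) := by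
  rw [Real.log_mul (by positivity) (by positivity), Real.log_mul (by positivity) (by positivity),
    Real.log_rpow hq₀, Real.log_rpow hq₁, Real.log_div hq₁.ne' hq₀.ne']
  ring

theorem stmt9_general (p : ℕ) (δ ξ : ℝ) (hδ : 0 < δ) (hξ : 0 < ξ) (hδξ : δ * ξ < p)
    (θ₀ τ : Fin p → ℝ) (ν : ℝ)
    (hθ₀ : θ₀ ⬝ᵥ θ₀ = 1) (hθ₁ : (θ₀ + ν • τ) ⬝ᵥ (θ₀ + ν • τ) = 1) :
    let γ : ℝ := (p : ℝ) * δ * ξ / ((p : ℝ) + ((p : ℝ) - 1) * δ * ξ);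
    let V₀ : Matrix (Fin p) (Fin p) ℝ :=
      (1 - δ * ξ / p) • (1 : Matrix (Fin p) (Fin p) ℝ) + (δ * ξ) • vecMulVec θ₀ θ₀;
    let V₁ : Matrix (Fin p) (Fin p) ℝ :=
      (1 - δ * ξ / p) • (1 : Matrix (Fin p) (Fin p) ℝ) +
        (δ * ξ) • vecMulVec (θ₀ + ν • τ) (θ₀ + ν • τ);
    ∀ u : Fin p → ℝ, u ⬝ᵥ u = 1 →
      0 < 1 - γ * (u ⬝ᵥ θ₀) ^ 2 ∧
      0 < 1 - γ * (u ⬝ᵥ (θ₀ + ν • τ)) ^ 2 ∧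
      Real.log (V₁.det ^ (-(1 : ℝ) / 2) * (u ⬝ᵥ (V₁⁻¹ *ᵥ u)) ^ (-(p : ℝ) / 2)) -
          Real.log (V₀.det ^ (-(1 : ℝ) / 2) * (u ⬝ᵥ (V₀⁻¹ *ᵥ u)) ^ (-(p : ℝ) / 2)) =
        -((p : ℝ) / 2) *
          Real.log (1 - γ * ν * (2 * (u ⬝ᵥ θ₀) * (u ⬝ᵥ τ) + ν * (u ⬝ᵥ τ) ^ 2) /
            (1 - γ * (u ⬝ᵥ θ₀) ^ 2)) := by
  intro γ V₀ V₁ u hu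
  set b := δ * ξ
  have hb : 0 < b := mul_pos hδ hξ
  have hp : (0 : ℝ) < p := hb.trans hδξ
  set a := 1 - b / p
  have ha : 0 < a := sub_pos.2 ((div_lt_one hp).2 hδξ)
  have hγ : γ = b / (a + b) := by
    simp only [γ, a]
    field_simp
    ring
  have hγ0 : 0 ≤ γ := by rw [hγ]; positivity
  have hγ1 : γ < 1 := by rw [hγ, div_lt_one (by positivity)]; linarith
  have hdet (w : Fin p → ℝ) (hw : w ⬝ᵥ w = 1) :
      (a • (1 : Matrix (Fin p) (Fin p) ℝ) + b • vecMulVec w w).det = a ^ p * (1 + b / a) := by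
    rw [det_smul_one_add_smul_vecMulVec a b w ha.ne', hw, Fintype.card_fin, mul_one]
  have hquad (w : Fin p → ℝ) (hw : w ⬝ᵥ w = 1) :
      u ⬝ᵥ ((a • (1 : Matrix (Fin p) (Fin p) ℝ) + b • vecMulVec w w)⁻¹ *ᵥ u) =
        a⁻¹ * (1 - γ * (u ⬝ᵥ w) ^ 2) := by
    rw [dotProduct_inv_smul_one_add_smul_vecMulVec_mulVec a b w ha.ne' (by rw [hw]; positivity),
      hu, hw, mul_one, hγ]
  have h₀ := one_sub_mul_sq_dotProduct_pos hγ0 hγ1 hu hθ₀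
  have h₁ := one_sub_mul_sq_dotProduct_pos hγ0 hγ1 hu hθ₁
  refine ⟨h₀, h₁, ?_⟩
  rw [hdet θ₀ hθ₀, hdet _ hθ₁, hquad θ₀ hθ₀, hquad _ hθ₁,
    log_rpow_mul_rpow_sub_log_rpow_mul_rpow (by positivity) (by positivity) (by positivity)]
  congr 2
  rw [dotProduct_add, dotProduct_smul, smul_eq_mul]
  field_simp
  ring

/-- Single-observation log-likelihood-ratio identity for angular Gaussian
densities with single-spike shapes `V₁` versus `V₀` (equation (C.4) of the paper): with
`γ := pδξ/(p + (p−1)δξ)`, for every unit vector `u` the quantities `1 − γ(uᵀθ₀)²` and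
`1 − γ(uᵀ(θ₀+ντ))²` are strictly positive and
`log[(det V₁)^{−1/2}(uᵀV₁⁻¹u)^{−p/2}] − log[(det V₀)^{−1/2}(uᵀV₀⁻¹u)^{−p/2}]
  = −(p/2) log(1 − γν (2(uᵀθ₀)(uᵀτ) + ν(uᵀτ)²)/(1 − γ(uᵀθ₀)²))`. -/
theorem stmt9 (p : ℕ) (hp : 1 ≤ p) (δ ξ : ℝ) (hδ : 0 < δ) (hξ : 0 < ξ) (hδξ : δ * ξ < p)
    (θ₀ τ : Fin p → ℝ) (ν : ℝ) (hν : 0 < ν)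
    (hθ₀ : θ₀ ⬝ᵥ θ₀ = 1) (hθ₁ : (θ₀ + ν • τ) ⬝ᵥ (θ₀ + ν • τ) = 1) :
    let γ : ℝ := (p : ℝ) * δ * ξ / ((p : ℝ) + ((p : ℝ) - 1) * δ * ξ);
    let V₀ : Matrix (Fin p) (Fin p) ℝ :=
      (1 - δ * ξ / p) • (1 : Matrix (Fin p) (Fin p) ℝ) + (δ * ξ) • vecMulVec θ₀ θ₀;
    let V₁ : Matrix (Fin p) (Fin p) ℝ :=
      (1 - δ * ξ / p) • (1 : Matrix (Fin p) (Fin p) ℝ) +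
        (δ * ξ) • vecMulVec (θ₀ + ν • τ) (θ₀ + ν • τ);
    ∀ u : Fin p → ℝ, u ⬝ᵥ u = 1 →
      0 < 1 - γ * (u ⬝ᵥ θ₀) ^ 2 ∧
      0 < 1 - γ * (u ⬝ᵥ (θ₀ + ν • τ)) ^ 2 ∧
      Real.log (V₁.det ^ (-(1 : ℝ) / 2) * (u ⬝ᵥ (V₁⁻¹ *ᵥ u)) ^ (-(p : ℝ) / 2)) -
          Real.log (V₀.det ^ (-(1 : ℝ) / 2) * (u ⬝ᵥ (V₀⁻¹ *ᵥ u)) ^ (-(p : ℝ) / 2)) =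
        -((p : ℝ) / 2) *
          Real.log (1 - γ * ν * (2 * (u ⬝ᵥ θ₀) * (u ⬝ᵥ τ) + ν * (u ⬝ᵥ τ) ^ 2) /
            (1 - γ * (u ⬝ᵥ θ₀) ^ 2)) :=
  stmt9_general p δ ξ hδ hξ hδξ θ₀ τ ν hθ₀ hθ₁
end

section
/- Let p ≥ 1 be an integer, let ξ > 0, and let θ₀, τ ∈ ℝ^p with ‖θ₀‖ = 1 and θ₀ᵀτ = −‖τ‖²/(2ξ). Set M := (p/(p+2))(I_{p²} + K_p + J_p) − J_p and ℓ := (θ₀ ⊗ τ) + (1/(2ξ))(τ ⊗ τ). Then ℓᵀMℓ = (p/(p+2))·(‖τ‖² − ‖τ‖⁴/(4ξ²)). -/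
open Matrix
open scoped Kronecker

/-- Column-stacking vectorization of a `p×p` matrix, as a vector indexed by
`Fin p × Fin p` (the entry at `(j, i)` is `M i j`). -/
def vecCol {p : ℕ} (M : Matrix (Fin p) (Fin p) ℝ) : Fin p × Fin p → ℝ :=
  fun x => M x.2 x.1

/-- The `p²×p²` commutation matrix `K_p := Σ_{i,j} (e_i e_jᵀ) ⊗ (e_j e_iᵀ)`. -/
def commK (p : ℕ) : Matrix (Fin p × Fin p) (Fin p × Fin p) ℝ :=
  ∑ i : Fin p, ∑ j : Fin p,
    (Matrix.single i j (1 : ℝ)) ⊗ₖ (Matrix.single j i (1 : ℝ))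

/-- The `p²×p²` matrix `J_p := (vec I_p)(vec I_p)ᵀ`. -/
def matJ (p : ℕ) : Matrix (Fin p × Fin p) (Fin p × Fin p) ℝ :=
  Matrix.vecMulVec (vecCol (1 : Matrix (Fin p) (Fin p) ℝ))
    (vecCol (1 : Matrix (Fin p) (Fin p) ℝ))

/-- Kronecker product of two vectors of `ℝ^p`, as a vector of `ℝ^{p²}`: the entry of
`a ⊗ b` at `(j, i)` is `a_j b_i`, so that `(a ⊗ b)ᵀ vec(Υ) = bᵀΥa`. -/
def kronVec {p : ℕ} (a b : Fin p → ℝ) : Fin p × Fin p → ℝ :=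
  fun x => a x.1 * b x.2

/-!
The constraint `θ₀ᵀτ = −‖τ‖²/(2ξ)` says exactly that `ℓ` is orthogonal to `vec I_p`, so the `J_p`
terms of `M` vanish on `ℓ` and `ℓᵀMℓ = (p/(p+2))(‖ℓ‖² + ℓᵀK_pℓ)`. Since `K_p` swaps the factors of
`a ⊗ b` and `(a ⊗ b)ᵀ(c ⊗ d) = (aᵀc)(bᵀd)`, both terms reduce to inner products of `θ₀` and `τ`:
with `c = 1/(2ξ)` and `s = ‖τ‖²` one finds `‖ℓ‖² = s − c²s²` and `ℓᵀK_pℓ = 0`.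
-/

section Kronecker

variable {p : ℕ}

lemma kronVec_dotProduct_kronVec (a b c d : Fin p → ℝ) :
    kronVec a b ⬝ᵥ kronVec c d = (a ⬝ᵥ c) * (b ⬝ᵥ d) := by
  simp only [kronVec, dotProduct, Fintype.sum_prod_type, Finset.sum_mul_sum]
  exact Finset.sum_congr rfl fun _ _ => Finset.sum_congr rfl fun _ _ => by ring

lemma commK_mulVec_kronVec (a b : Fin p → ℝ) : commK p *ᵥ kronVec a b = kronVec b a := by
  ext ⟨r, s⟩
  simp [commK, mulVec, dotProduct, kronVec, Matrix.sum_apply, single,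
    Fintype.sum_prod_type, ite_and, mul_comm]

lemma vecCol_one_dotProduct_kronVec (a b : Fin p → ℝ) :
    vecCol (1 : Matrix (Fin p) (Fin p) ℝ) ⬝ᵥ kronVec a b = a ⬝ᵥ b := by
  simp [vecCol, kronVec, dotProduct, Fintype.sum_prod_type, Matrix.one_apply, eq_comm]

lemma matJ_mulVec (v : Fin p × Fin p → ℝ) :
    matJ p *ᵥ v = (vecCol (1 : Matrix (Fin p) (Fin p) ℝ) ⬝ᵥ v) • vecCol 1 := by
  ext x
  simp only [matJ, mulVec, dotProduct, vecMulVec_apply, Pi.smul_apply, smul_eq_mul, Finset.sum_mul]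
  exact Finset.sum_congr rfl fun _ _ => by ring

lemma dotProduct_mulVec_eq_of_vecCol_one_dotProduct_eq_zero (c : ℝ) {v : Fin p × Fin p → ℝ}
    (hv : vecCol (1 : Matrix (Fin p) (Fin p) ℝ) ⬝ᵥ v = 0) :
    v ⬝ᵥ ((c • (1 + commK p + matJ p) - matJ p) *ᵥ v) = c * (v ⬝ᵥ v + v ⬝ᵥ (commK p *ᵥ v)) := by
  simp only [sub_mulVec, smul_mulVec, add_mulVec, one_mulVec, matJ_mulVec, hv, zero_smul,
    dotProduct_smul, dotProduct_add, smul_eq_mul, add_zero, sub_zero]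

end Kronecker

theorem stmt18_general (p : ℕ) (ξ : ℝ)
    (θ₀ τ : Fin p → ℝ) (hθ₀ : θ₀ ⬝ᵥ θ₀ = 1)
    (hτ : θ₀ ⬝ᵥ τ = -(τ ⬝ᵥ τ) / (2 * ξ)) :
    let M : Matrix (Fin p × Fin p) (Fin p × Fin p) ℝ :=
      ((p : ℝ) / ((p : ℝ) + 2)) •
          ((1 : Matrix (Fin p × Fin p) (Fin p × Fin p) ℝ) + commK p + matJ p) -
        matJ p;
    let ℓ : Fin p × Fin p → ℝ := kronVec θ₀ τ + (1 / (2 * ξ)) • kronVec τ τ;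
    ℓ ⬝ᵥ (M *ᵥ ℓ) =
      ((p : ℝ) / ((p : ℝ) + 2)) * ((τ ⬝ᵥ τ) - (τ ⬝ᵥ τ) ^ 2 / (4 * ξ ^ 2)) := by
  intro M ℓ
  set c : ℝ := 1 / (2 * ξ)
  set s : ℝ := τ ⬝ᵥ τ
  have hθτ : θ₀ ⬝ᵥ τ = -(c * s) := by rw [hτ]; ring
  have hτθ : τ ⬝ᵥ θ₀ = -(c * s) := by rw [dotProduct_comm, hθτ]
  have hℓ_orth : vecCol (1 : Matrix (Fin p) (Fin p) ℝ) ⬝ᵥ ℓ = 0 := by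
    simp only [ℓ, dotProduct_add, dotProduct_smul, vecCol_one_dotProduct_kronVec, hθτ, smul_eq_mul]
    ring
  have hKℓ : commK p *ᵥ ℓ = kronVec τ θ₀ + c • kronVec τ τ := by
    simp only [ℓ, mulVec_add, mulVec_smul, commK_mulVec_kronVec, c]
  have hℓℓ : ℓ ⬝ᵥ ℓ = s - c ^ 2 * s ^ 2 := by
    simp only [ℓ, dotProduct_add, add_dotProduct, dotProduct_smul, smul_dotProduct, smul_eq_mul,
      kronVec_dotProduct_kronVec, hθτ, hτθ, hθ₀]
    ring
  have hℓKℓ : ℓ ⬝ᵥ (commK p *ᵥ ℓ) = 0 := by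
    simp only [hKℓ, ℓ, dotProduct_add, add_dotProduct, dotProduct_smul, smul_dotProduct,
      smul_eq_mul, kronVec_dotProduct_kronVec, hθτ, hτθ]
    ring
  rw [dotProduct_mulVec_eq_of_vecCol_one_dotProduct_eq_zero _ hℓ_orth, hℓℓ, hℓKℓ]
  ring

/-- Let `θ₀ ∈ ℝ^p` be a unit vector and `τ ∈ ℝ^p` with
`θ₀ᵀτ = −‖τ‖²/(2ξ)` (`ξ > 0`). With `M := (p/(p+2))(I_{p²} + K_p + J_p) − J_p` and
`ℓ := (θ₀ ⊗ τ) + (1/(2ξ))(τ ⊗ τ)`, one has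
`ℓᵀMℓ = (p/(p+2))(‖τ‖² − ‖τ‖⁴/(4ξ²))`. -/
theorem stmt18 (p : ℕ) (hp : 1 ≤ p) (ξ : ℝ) (hξ : 0 < ξ)
    (θ₀ τ : Fin p → ℝ) (hθ₀ : θ₀ ⬝ᵥ θ₀ = 1)
    (hτ : θ₀ ⬝ᵥ τ = -(τ ⬝ᵥ τ) / (2 * ξ)) :
    let M : Matrix (Fin p × Fin p) (Fin p × Fin p) ℝ :=
      ((p : ℝ) / ((p : ℝ) + 2)) •
          ((1 : Matrix (Fin p × Fin p) (Fin p × Fin p) ℝ) + commK p + matJ p) -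
        matJ p;
    let ℓ : Fin p × Fin p → ℝ := kronVec θ₀ τ + (1 / (2 * ξ)) • kronVec τ τ;
    ℓ ⬝ᵥ (M *ᵥ ℓ) =
      ((p : ℝ) / ((p : ℝ) + 2)) * ((τ ⬝ᵥ τ) - (τ ⬝ᵥ τ) ^ 2 / (4 * ξ ^ 2)) :=
  stmt18_general p ξ θ₀ τ hθ₀ hτ
end

section
/- Let p ≥ 1 be an integer, let ξ > 0, and let θ₀, τ ∈ ℝ^p with ‖θ₀‖ = 1 and θ₀ᵀτ = −‖τ‖²/(2ξ). Then (1/(4(p+2)))·[ 4·(θ₀⊗θ₀)ᵀ(2I_{p²} + J_p)(τ⊗τ) + (4/ξ)·(τ⊗τ)ᵀ(2I_{p²} + J_p)(τ⊗θ₀) + (1/ξ²)·(τ⊗τ)ᵀ(2I_{p²} + J_p)(τ⊗τ) ] = ‖τ‖²/(p+2) − ‖τ‖⁴/(4(p+2)ξ²). -/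
open Matrix
open scoped Kronecker

lemma l1 {p : ℕ} (c d : Fin p → ℝ) :
    vecCol (1 : Matrix (Fin p) (Fin p) ℝ) ⬝ᵥ kronVec c d = c ⬝ᵥ d := by
  simp [dotProduct, vecCol, kronVec, Matrix.one_apply, Fintype.sum_prod_type, ite_mul]

lemma l2 {p : ℕ} (a b c d : Fin p → ℝ) :
    kronVec a b ⬝ᵥ kronVec c d = (a ⬝ᵥ c) * (b ⬝ᵥ d) := by
  simp only [dotProduct, kronVec, Fintype.sum_prod_type]
  rw [Finset.sum_mul_sum]
  exact Finset.sum_congr rfl fun j _ => Finset.sum_congr rfl fun i _ => by ring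

lemma hJ {p : ℕ} (u : Fin p × Fin p → ℝ) :
    matJ p *ᵥ u = fun x => vecCol (1 : Matrix (Fin p) (Fin p) ℝ) x *
      (vecCol (1 : Matrix (Fin p) (Fin p) ℝ) ⬝ᵥ u) := by
  funext x
  simp [matJ, mulVec, vecMulVec, dotProduct, Finset.mul_sum, mul_assoc]

lemma key {p : ℕ} (a b c d : Fin p → ℝ) :
    kronVec a b ⬝ᵥ ((2 • (1 : Matrix (Fin p × Fin p) (Fin p × Fin p) ℝ) + matJ p) *ᵥ kronVec c d)
      = 2 * (a ⬝ᵥ c) * (b ⬝ᵥ d) + (a ⬝ᵥ b) * (c ⬝ᵥ d) := by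
  rw [Matrix.add_mulVec, dotProduct_add, hJ]
  have h2 : (2 • (1 : Matrix (Fin p × Fin p) (Fin p × Fin p) ℝ)) *ᵥ kronVec c d
      = fun x => 2 * kronVec c d x := by
    funext x
    simp [mulVec, dotProduct, Matrix.one_apply, ite_mul, Finset.sum_ite_eq]
  rw [h2]
  have h3 : kronVec a b ⬝ᵥ (fun x => 2 * kronVec c d x) = 2 * (kronVec a b ⬝ᵥ kronVec c d) := by
    simp only [dotProduct, Finset.mul_sum]
    exact Finset.sum_congr rfl fun x _ => by ring
  have h4 : kronVec a b ⬝ᵥ (fun x => vecCol (1 : Matrix (Fin p) (Fin p) ℝ) x *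
      (vecCol (1 : Matrix (Fin p) (Fin p) ℝ) ⬝ᵥ kronVec c d))
      = (kronVec a b ⬝ᵥ vecCol (1 : Matrix (Fin p) (Fin p) ℝ)) * (c ⬝ᵥ d) := by
    rw [← l1 c d]
    simp only [dotProduct, Finset.sum_mul]
    exact Finset.sum_congr rfl fun x _ => by ring
  rw [h3, h4, l2]
  have h5 : kronVec a b ⬝ᵥ vecCol (1 : Matrix (Fin p) (Fin p) ℝ) = a ⬝ᵥ b := by
    simp [dotProduct, kronVec, vecCol, Matrix.one_apply, Fintype.sum_prod_type, mul_ite]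
  rw [h5]
  ring

/-- **computations (C.7)–(C.8).** Let `θ₀ ∈ ℝ^p` be a unit vector and
`τ ∈ ℝ^p` with `θ₀ᵀτ = −‖τ‖²/(2ξ)` (`ξ > 0`). Then
`(1/(4(p+2))) [4 (θ₀⊗θ₀)ᵀ(2I_{p²}+J_p)(τ⊗τ) + (4/ξ)(τ⊗τ)ᵀ(2I_{p²}+J_p)(τ⊗θ₀)
 + (1/ξ²)(τ⊗τ)ᵀ(2I_{p²}+J_p)(τ⊗τ)] = ‖τ‖²/(p+2) − ‖τ‖⁴/(4(p+2)ξ²)`. -/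
theorem stmt19 (p : ℕ) (hp : 1 ≤ p) (ξ : ℝ) (hξ : 0 < ξ)
    (θ₀ τ : Fin p → ℝ) (hθ₀ : θ₀ ⬝ᵥ θ₀ = 1)
    (hτ : θ₀ ⬝ᵥ τ = -(τ ⬝ᵥ τ) / (2 * ξ)) :
    let Q : Matrix (Fin p × Fin p) (Fin p × Fin p) ℝ :=
      2 • (1 : Matrix (Fin p × Fin p) (Fin p × Fin p) ℝ) + matJ p;
    (1 / (4 * ((p : ℝ) + 2))) *
        (4 * (kronVec θ₀ θ₀ ⬝ᵥ (Q *ᵥ kronVec τ τ)) +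
          (4 / ξ) * (kronVec τ τ ⬝ᵥ (Q *ᵥ kronVec τ θ₀)) +
          (1 / ξ ^ 2) * (kronVec τ τ ⬝ᵥ (Q *ᵥ kronVec τ τ))) =
      (τ ⬝ᵥ τ) / ((p : ℝ) + 2) - (τ ⬝ᵥ τ) ^ 2 / (4 * ((p : ℝ) + 2) * ξ ^ 2) := by
  intro Q
  have hτθ : τ ⬝ᵥ θ₀ = -(τ ⬝ᵥ τ) / (2 * ξ) := by rw [dotProduct_comm]; exact hτ
  simp only [Q, key, hθ₀, hτ, hτθ]
  have hξ' : ξ ≠ 0 := ne_of_gt hξ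
  have hp2 : (p : ℝ) + 2 ≠ 0 := by positivity
  field_simp
  ring
end
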